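/- arXiv:2601.23110 — 5 statements merged into one kernel-verified Lean document; each statement's English description precedes it below -/
import Mathlib

section
/- Let R be an associative ring with p²·R = 0 for a prime p, and let u, v ∈ R such that [u,v] = κ + p·w with κ central. Then [u^p, v] = p·(κ·u^{p-1} + ad(u)^{p-1}(w)). -/
/-!
Let `ℓ` and `r` be left and right multiplication by `u`, so that `ad u = ℓ - r`, and let
`S = ∑ i < p, ℓⁱ r^(p-1-i)`. Since `ℓ` and `r` commute, `S (ℓ - r) = ℓ^p - r^p = ad (u^p)`,
hence `[u^p, v] = S κ + p S w = p κ u^(p-1) + p S w`. Moreover `(ℓ - r)^(p-1) ≡ S` modulo `p`,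
because `(-1)^(p-1-i) C(p-1, i) ≡ 1 (mod p)`; as `p² = 0`, this gives `p S w = p ad(u)^(p-1) w`.
-/

open Finset LinearMap

theorem ZMod.choose_sub_one_eq_neg_one_pow {p : ℕ} [Fact p.Prime] {k : ℕ} (hk : k < p) :
    ((p - 1).choose k : ZMod p) = (-1) ^ k := by
  induction k with
  | zero => simp
  | succ k ih =>
    have hpascal : (p - 1).choose k + (p - 1).choose (k + 1) = p.choose (k + 1) := by
      conv_rhs => rw [← Nat.sub_one_add_one (Fact.out : p.Prime).ne_zero]
      exact (Nat.choose_succ_succ _ _).symm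
    have hvanish : (p.choose (k + 1) : ZMod p) = 0 :=
      (ZMod.natCast_eq_zero_iff _ _).2 ((Fact.out : p.Prime).dvd_choose_self k.succ_ne_zero hk)
    have hcast := congrArg (Nat.cast : ℕ → ZMod p) hpascal
    push_cast at hcast
    rw [ih (by omega), hvanish] at hcast
    rw [pow_succ]
    linear_combination hcast

section Ring

variable {A : Type*} [Ring A]

theorem Commute.exists_sub_pow_prime_sub_one_eq_geom_sum₂_add {x y : A} (h : Commute x y)
    {p : ℕ} (hp : p.Prime) :
    ∃ t : A, (x - y) ^ (p - 1) = ∑ i ∈ range p, x ^ i * y ^ (p - 1 - i) + p * t := by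
  have := Fact.mk hp
  have hcoeff : ∀ i < p, ∃ c : ℤ, (-1) ^ (p - 1 - i) * ((p - 1).choose i : ℤ) = 1 + p * c := by
    intro i hi
    have hmod : ((1 : ℤ) : ZMod p) = (((-1) ^ (p - 1 - i) * (p - 1).choose i : ℤ) : ZMod p) := by
      push_cast
      rw [ZMod.choose_sub_one_eq_neg_one_pow hi, ← pow_add, Nat.sub_add_cancel (by omega),
        ZMod.pow_card_sub_one_eq_one (neg_ne_zero.2 one_ne_zero)]
    obtain ⟨c, hc⟩ := (ZMod.intCast_eq_intCast_iff_dvd_sub _ _ _).1 hmod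
    exact ⟨c, by linarith⟩
  choose! c hc using hcoeff
  refine ⟨∑ i ∈ range p, (c i : A) * (x ^ i * y ^ (p - 1 - i)), ?_⟩
  rw [sub_eq_add_neg, h.neg_right.add_pow, Nat.sub_one_add_one hp.ne_zero, mul_sum,
    ← sum_add_distrib]
  refine sum_congr rfl fun i hi => ?_
  have key := congrArg (fun z : ℤ => (z : A) * (x ^ i * y ^ (p - 1 - i))) (hc i (mem_range.1 hi))
  simp only [Int.cast_mul, Int.cast_pow, Int.cast_neg, Int.cast_one, Int.cast_add,
    Int.cast_natCast] at key
  rw [add_mul, one_mul, mul_assoc (p : A)] at key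
  have hsign : Commute ((-1 : A) ^ (p - 1 - i)) (x ^ i) := (Commute.neg_one_left _).pow_left _
  rw [← key, neg_pow, ← mul_assoc, ← hsign.eq, mul_assoc _ (x ^ i), mul_assoc,
    ← (Nat.cast_commute _ _).eq, mul_assoc]

theorem pow_mul_sub_mul_pow_eq_geom_sum₂_apply (u v : A) (n : ℕ) :
    u ^ n * v - v * u ^ n =
      (∑ i ∈ range n, mulLeft ℤ u ^ i * mulRight ℤ u ^ (n - 1 - i)) (u * v - v * u) := by
  have := congrArg (· v) ((commute_mulLeft_right (R := ℤ) u u).geom_sum₂_mul n)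
  simpa using this.symm

theorem geom_sum₂_mulLeft_mulRight_apply_of_commute {κ u : A} (h : Commute κ u) (n : ℕ) :
    (∑ i ∈ range n, mulLeft ℤ u ^ i * mulRight ℤ u ^ (n - 1 - i)) κ = n * (κ * u ^ (n - 1)) := by
  simp only [LinearMap.sum_apply, Module.End.mul_apply, pow_mulLeft, pow_mulRight,
    mulLeft_apply, mulRight_apply]
  calc ∑ i ∈ range n, u ^ i * (κ * u ^ (n - 1 - i))
      = ∑ i ∈ range n, κ * u ^ (n - 1) := sum_congr rfl fun i hi => by
        rw [← mul_assoc, ← (h.pow_right i).eq, mul_assoc, ← pow_add,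
          Nat.add_sub_of_le (by grind)]
    _ = n * (κ * u ^ (n - 1)) := by rw [sum_const, card_range, nsmul_eq_mul]

end Ring

theorem comm_pow_p {R : Type*} [Ring R] (p : ℕ) (hp : p.Prime)
    (hchar : ((p : R)) ^ 2 = 0) (u v κ w : R)
    (hκ : ∀ x : R, κ * x = x * κ)
    (huv : u * v - v * u = κ + (p : R) * w) :
    u ^ p * v - v * u ^ p =
      (p : R) * (κ * u ^ (p - 1) + (fun x => u * x - x * u)^[p - 1] w) := by
  set S := ∑ i ∈ range p, mulLeft ℤ u ^ i * mulRight ℤ u ^ (p - 1 - i)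
  obtain ⟨t, ht⟩ :=
    (commute_mulLeft_right (R := ℤ) u u).exists_sub_pow_prime_sub_one_eq_geom_sum₂_add hp
  have had : (fun x => u * x - x * u)^[p - 1] w = S w + p * t w := by
    have := congrArg (· w) ht
    simp only [Module.End.pow_apply, LinearMap.add_apply, Module.End.mul_apply,
      Module.End.natCast_apply, nsmul_eq_mul] at this
    exact this
  have hpw : S (p * w) = p * S w := by rw [← nsmul_eq_mul, map_nsmul, nsmul_eq_mul]
  rw [pow_mul_sub_mul_pow_eq_geom_sum₂_apply, huv, map_add, hpw,
    geom_sum₂_mulLeft_mulRight_apply_of_commute (hκ u), had, mul_add, mul_add,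
    ← mul_assoc (p : R) p, ← sq, hchar, zero_mul, add_zero]
end

section
/- (Jacobson's formula special case) Let R be an associative algebra over Z/pZ for a prime p, and let C ⊆ R be a commutative subalgebra. Let a, b ∈ R with b ∈ C, ad(a)(C) ⊆ C, and suppose all elements of C commute with each other. Then (a+b)^p = a^p + b^p + ad(a)^{p-1}(b). -/
/-!
Put `z = a X + b` in `R[X]`. Differentiating `z ^ p` gives `∑ z ^ j a z ^ (p - 1 - j)`, which in
characteristic `p` equals `ad(z) ^ (p - 1) a`, because `(p - 1).choose j = (-1) ^ j` there. Since
`X` is central and `C` is commutative, `ad(z) (c X ^ k) = ad(a)(c) X ^ (k + 1)` for `c ∈ C`, so this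
derivative is `-ad(a) ^ (p - 1) (b) X ^ (p - 2)`, the derivative of `ad(a) ^ (p - 1) (b) X ^ (p - 1)`.
In characteristic `p` the coefficients of a polynomial with zero derivative vanish away from
multiples of `p`, so `z ^ p = a ^ p X ^ p + ad(a) ^ (p - 1) (b) X ^ (p - 1) + b ^ p`; now put `X = 1`.
-/

open Polynomial Finset

instance Module.End.charP_int {S : Type*} [Ring S] {p : ℕ} [CharP S p] :
    CharP (Module.End ℤ S) p where
  cast_eq_zero_iff n := by
    rw [← CharP.cast_eq_zero_iff S p]
    constructor
    · intro h
      simpa using congr($h 1)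
    · intro h
      ext w
      simp [h]

section CharP

variable {S : Type*} [Ring S] {p : ℕ} [hp : Fact p.Prime] [CharP S p]

theorem Nat.cast_choose_pred_eq_neg_one_pow {j : ℕ} (hj : j < p) :
    (((p - 1).choose j : ℕ) : S) = (-1) ^ j := by
  induction j with
  | zero => simp
  | succ j ih =>
    have hpascal : p.choose (j + 1) = (p - 1).choose j + (p - 1).choose (j + 1) := by
      rw [← Nat.choose_succ_succ', Nat.sub_add_cancel hp.out.one_le]
    have hsum : (((p - 1).choose j : ℕ) : S) + (((p - 1).choose (j + 1) : ℕ) : S) = 0 := by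
      rw [← Nat.cast_add, ← hpascal, CharP.cast_eq_zero_iff S p]
      exact hp.out.dvd_choose_self j.succ_ne_zero hj
    rw [eq_neg_of_add_eq_zero_right hsum, ih (by omega), pow_succ, mul_neg_one]

theorem neg_one_pow_pred_char : (-1 : S) ^ (p - 1) = 1 := by
  have h := neg_one_pow_char S p
  nth_rw 1 [← Nat.sub_add_cancel hp.out.one_le, pow_succ, mul_neg_one, neg_inj] at h
  exact h

theorem Commute.sub_pow_pred_char {x y : S} (h : Commute x y) :
    (x - y) ^ (p - 1) = ∑ j ∈ range p, x ^ j * y ^ (p - 1 - j) := by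
  rw [sub_eq_add_neg, h.neg_right.add_pow, Nat.sub_add_cancel hp.out.one_le]
  refine sum_congr rfl fun j hj => ?_
  have hj : j < p := mem_range.1 hj
  rw [neg_pow', Nat.cast_choose_pred_eq_neg_one_pow hj, mul_assoc, mul_assoc, ← pow_add,
    Nat.sub_add_cancel (by omega), neg_one_pow_pred_char, mul_one]

theorem iterate_commutator_pred_char (x y : S) :
    (fun w => x * w - w * x)^[p - 1] y = ∑ j ∈ range p, x ^ j * y * x ^ (p - 1 - j) := by
  have had : (fun w => x * w - w * x) = ⇑(LinearMap.mulLeft ℤ x - LinearMap.mulRight ℤ x) := rfl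
  rw [had, ← Module.End.pow_apply, (LinearMap.commute_mulLeft_right x x).sub_pow_pred_char]
  simp [LinearMap.pow_mulLeft, LinearMap.pow_mulRight, mul_assoc]

end CharP

namespace Polynomial

variable {R : Type*}

theorem derivative_pow_eq_sum [Semiring R] (f : R[X]) (n : ℕ) :
    derivative (f ^ n) = ∑ j ∈ range n, f ^ j * derivative f * f ^ (n - 1 - j) := by
  induction n with
  | zero => simp
  | succ n ih =>
    rw [pow_succ, derivative_mul, ih, sum_range_succ, sum_mul, Nat.add_sub_cancel, Nat.sub_self,
      pow_zero, mul_one]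
    congr 1
    refine sum_congr rfl fun j hj => ?_
    rw [mul_assoc, ← pow_succ, show n - 1 - j + 1 = n - j by grind]

variable [Ring R]

section CharP

variable {p : ℕ} [hp : Fact p.Prime] [CharP R p]

theorem coeff_eq_zero_of_derivative_eq_zero {f : R[X]} (hf : derivative f = 0) {k : ℕ}
    (hk : ¬ p ∣ k) : f.coeff k = 0 := by
  obtain ⟨m, rfl⟩ : ∃ m, k = m + 1 :=
    Nat.exists_eq_succ_of_ne_zero (by rintro rfl; exact hk (dvd_zero p))
  have h := congr(coeff $hf m)
  rw [coeff_derivative, coeff_zero, ← Nat.cast_succ] at h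
  exact ((CharP.isUnit_natCast_iff hp.out).2 hk).mul_left_eq_zero.1 h

theorem eq_C_mul_X_pow_add_C_of_derivative_eq_zero {f : R[X]} (hf : derivative f = 0)
    (hdeg : f.natDegree ≤ p) : f = C (f.coeff p) * X ^ p + C (f.coeff 0) := by
  ext k
  rw [coeff_add, coeff_C_mul_X_pow, coeff_C]
  rcases lt_trichotomy k p with hlt | rfl | hgt
  · rcases Nat.eq_zero_or_pos k with rfl | hpos
    · simp [hp.out.ne_zero.symm]
    · rw [if_neg hlt.ne, if_neg hpos.ne', add_zero]
      exact coeff_eq_zero_of_derivative_eq_zero hf (Nat.not_dvd_of_pos_of_lt hpos hlt)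
  · simp [hp.out.ne_zero]
  · rw [if_neg hgt.ne', if_neg (by omega), add_zero]
    exact coeff_eq_zero_of_natDegree_lt (hdeg.trans_lt hgt)

end CharP

theorem commutator_C_mul_X_add_C (a b c : R) (k : ℕ) :
    (C a * X + C b) * (C c * X ^ k) - C c * X ^ k * (C a * X + C b)
      = C (a * c - c * a) * X ^ (k + 1) + C (b * c - c * b) * X ^ k := by
  simp only [C_mul_X_eq_monomial, C_mul_X_pow_eq_monomial]
  simp only [← monomial_zero_left, mul_add, add_mul, monomial_mul_monomial, map_sub]
  rw [add_comm 1 k, zero_add, add_zero]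
  abel

theorem iterate_commutator_C_mul_X_add_C {a b c : R}
    (hb : ∀ k, Commute b ((fun x => a * x - x * a)^[k] c)) (k : ℕ) :
    (fun w => (C a * X + C b) * w - w * (C a * X + C b))^[k] (C c)
      = C ((fun x => a * x - x * a)^[k] c) * X ^ k := by
  induction k with
  | zero => simp
  | succ k ih =>
    rw [Function.iterate_succ_apply', ih, commutator_C_mul_X_add_C, (hb k).eq, sub_self, C_0,
      zero_mul, add_zero, Function.iterate_succ_apply']

section CharP

variable {p : ℕ} [hp : Fact p.Prime] [CharP R p] {a b : R}

theorem derivative_C_mul_X_add_C_pow_char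
    (hb : ∀ k, Commute b ((fun x => a * x - x * a)^[k + 1] b)) :
    derivative ((C a * X + C b) ^ p)
      = derivative (C ((fun x => a * x - x * a)^[p - 1] b) * X ^ (p - 1)) := by
  set z := C a * X + C b
  obtain ⟨k, hk⟩ : ∃ k, p - 1 = k + 1 := ⟨p - 2, by have := hp.out.two_le; omega⟩
  have hzCa : z * C a - C a * z = -C (a * b - b * a) := by
    simpa using commutator_C_mul_X_add_C a b a 0
  have hneg : Function.Commute (fun w => z * w - w * z) Neg.neg := fun w => by
    simp only [mul_neg, neg_mul, sub_neg_eq_add, neg_sub, neg_add_eq_sub]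
  have hp1 : ((p - 1 : ℕ) : R) = -1 := by
    rw [Nat.cast_pred hp.out.pos, CharP.cast_eq_zero, zero_sub]
  rw [derivative_pow_eq_sum, show derivative z = C a by simp [z],
    ← iterate_commutator_pred_char, derivative_C_mul_X_pow, hp1, hk, Function.iterate_succ_apply,
    hzCa, (hneg.iterate_left k).eq, iterate_commutator_C_mul_X_add_C hb]
  simp

theorem C_mul_X_add_C_pow_char (hb : ∀ k, Commute b ((fun x => a * x - x * a)^[k + 1] b)) :
    (C a * X + C b) ^ p
      = C (a ^ p) * X ^ p + C ((fun x => a * x - x * a)^[p - 1] b) * X ^ (p - 1) + C (b ^ p) := by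
  set z := C a * X + C b
  set u := (fun x => a * x - x * a)^[p - 1] b
  have hzdeg : z.natDegree ≤ 1 := natDegree_linear_le
  have hdeg : (z ^ p - C u * X ^ (p - 1)).natDegree ≤ p :=
    (natDegree_sub_le _ _).trans <| max_le (natDegree_pow_le_of_le p hzdeg |>.trans (by simp))
      (natDegree_C_mul_X_pow_le _ _ |>.trans (Nat.sub_le p 1))
  have hzp : (z ^ p).coeff p = a ^ p := by
    simpa [z] using coeff_pow_of_natDegree_le (m := p) hzdeg
  have hz0 : (z ^ p).coeff 0 = b ^ p := by
    rw [← constantCoeff_apply, map_pow]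
    simp [z]
  have key := eq_C_mul_X_pow_add_C_of_derivative_eq_zero
    (by rw [derivative_sub, derivative_C_mul_X_add_C_pow_char hb, sub_self]) hdeg
  have hp2 := hp.out.two_le
  rw [coeff_sub, coeff_sub, hzp, hz0, coeff_C_mul_X_pow, coeff_C_mul_X_pow, if_neg (by omega),
    if_neg (by omega), sub_zero, sub_zero, sub_eq_iff_eq_add] at key
  rw [key]
  abel

end CharP

end Polynomial

theorem jacobson_special {R : Type*} [Ring R] (p : ℕ) (hp : p.Prime) [CharP R p]
    (C : Subring R) (hC : ∀ x ∈ C, ∀ y ∈ C, x * y = y * x)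
    (a b : R) (hb : b ∈ C) (ha : ∀ c ∈ C, a * c - c * a ∈ C) :
    (a + b) ^ p = a ^ p + b ^ p + (fun x => a * x - x * a)^[p - 1] b := by
  have := Fact.mk hp
  have hcomm (k : ℕ) : Commute b ((fun x => a * x - x * a)^[k + 1] b) :=
    hC b hb _ (Set.MapsTo.iterate ha (k + 1) hb)
  let φ := eval₂RingHom' (RingHom.id R) 1 fun _ => Commute.one_right _
  have hφC (r : R) : φ (Polynomial.C r) = r := by simp [φ]
  have hφX : φ X = 1 := by simp [φ]
  have key := congrArg φ (C_mul_X_add_C_pow_char hcomm)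
  simp only [map_add, map_mul, map_pow, hφC, hφX, mul_one, one_pow] at key
  rw [key]
  abel
end

section
/- Let R be a unique factorization domain and φ : Mat_m(R) → Mat_m(R) a ring homomorphism (preserving 1). Then there exists an invertible matrix G ∈ GL_m(R) and a ring endomorphism φ_c : R → R such that φ((a_{ij})) = G · (φ_c(a_{ij})) · G^{-1} for all matrices (a_{ij}). Moreover G is unique up to multiplication by a unit of R. -/
/-!
The images `φ (single i j 1)` are again a system of matrix units. Over a UFD the nonzero
idempotent `φ (single z z 1)` fixes a primitive vector `r` (divide a nonzero column by the gcd of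
its entries), and the matrix `G` with columns `φ (single k z 1) *ᵥ r` intertwines
`φ (single i j 1)` with `single i j 1`. Over any domain these columns are independent (apply
`φ (single z j 1)` to a relation), so `det G ≠ 0`; running the same argument over `R ⧸ (p)`,
where `r` stays nonzero by primitivity, shows that no prime divides `det G`, so `G` is invertible.
Then `G⁻¹ φ(-) G` fixes every matrix unit, so it maps scalar matrices, which are exactly the
matrices commuting with all matrix units, to scalar matrices, and it is the entrywise
application of the ring endomorphism of `R` so obtained. Two such `G` differ by a matrix
commuting with every matrix unit, i.e. by a scalar, which must be a unit.
-/

open Matrix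

namespace Matrix

variable {n : Type*} [Fintype n] [DecidableEq n]

section MatrixUnits

variable {S T : Type*} [Semiring S] [Semiring T]

theorem single_one_mul_single_one (i j k l : n) :
    single i j (1 : S) * single k l 1 = if j = k then single i l 1 else 0 := by
  split_ifs with h
  · subst h
    simp
  · simp [h]

theorem map_single_one_mul_map_single_one (φ : Matrix n n S →+* T) (i j k l : n) :
    φ (single i j 1) * φ (single k l 1) = if j = k then φ (single i l 1) else 0 := by
  rw [← map_mul, single_one_mul_single_one]
  split_ifs <;> simp

theorem map_single_one_ne_zero [Nontrivial T] (φ : Matrix n n S →+* T) (i : n) :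
    φ (single i i 1) ≠ 0 := by
  intro h
  have hone : ∑ k, single k i (1 : S) * single i i 1 * single i k 1 = 1 := by
    simp only [single_mul_mul_single, single_apply_same, mul_one, sum_single_one]
  apply one_ne_zero (α := T)
  rw [← map_one φ, ← hone, map_sum]
  simp only [map_mul, h, mul_zero, zero_mul, Finset.sum_const_zero]

theorem scalar_mul_single_one (i j : n) (a : S) : scalar n a * single i j 1 = single i j a := by
  rw [scalar_apply, ← smul_eq_diagonal_mul, smul_single, smul_eq_mul, mul_one]

theorem single_one_mul_scalar (i j : n) (a : S) : single i j 1 * scalar n a = single i j a := by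
  rw [scalar_apply, ← op_smul_eq_mul_diagonal, smul_single, op_smul_eq_mul, one_mul]

theorem exists_eq_mapMatrix_of_map_single_one [Nonempty n] (ψ : Matrix n n S →+* Matrix n n T)
    (h : ∀ i j, ψ (single i j 1) = single i j 1) : ∃ c : S →+* T, ψ = c.mapMatrix := by
  have hcomm (a : S) (i j : n) : Commute (single i j 1) (ψ (scalar n a)) := by
    rw [← h, Commute, SemiconjBy, ← map_mul, ← map_mul, scalar_mul_single_one,
      single_one_mul_scalar]
  choose c hc using fun a => mem_range_scalar_iff_commute_single'.2 (hcomm a)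
  let c' : S →+* T :=
    { toFun := c
      map_one' := scalar_inj.1 (by rw [hc, map_one, map_one, map_one])
      map_mul' := fun a b => scalar_inj.1 (by rw [hc]; simp only [map_mul, ← hc])
      map_zero' := scalar_inj.1 (by rw [hc, map_zero, map_zero, map_zero])
      map_add' := fun a b => scalar_inj.1 (by rw [hc]; simp only [map_add, ← hc]) }
  refine ⟨c', RingHom.ext fun A => Matrix.induction_on' A (by simp) (fun p q hp hq => ?_) ?_⟩
  · rw [map_add, map_add, hp, hq]
  · intro i j a
    rw [RingHom.mapMatrix_apply, map_single, ← scalar_mul_single_one, map_mul, ← hc, h,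
      scalar_mul_single_one]
    rfl

end MatrixUnits

section Frame

variable {S K : Type*} [Semiring S] [CommRing K]

def unitFrame (φ : Matrix n n S →+* Matrix n n K) (z : n) (r : n → K) : Matrix n n K :=
  of fun a k => (φ (single k z 1) *ᵥ r) a

theorem map_single_one_mul_unitFrame (φ : Matrix n n S →+* Matrix n n K) (z : n) (r : n → K)
    (i j : n) : φ (single i j 1) * unitFrame φ z r = unitFrame φ z r * single i j 1 := by
  ext a c
  have hcol : (φ (single i j 1) * unitFrame φ z r) a c =
      ((φ (single i j 1) * φ (single c z 1)) *ᵥ r) a := by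
    rw [← mulVec_mulVec]
    simp [unitFrame, mul_apply, mulVec, dotProduct]
  rw [hcol, map_single_one_mul_map_single_one]
  by_cases h : j = c
  · subst h
    simp [unitFrame]
  · simp [h, Ne.symm h]

theorem unitFrame_mulVec_single_one (φ : Matrix n n S →+* Matrix n n K) (z : n) (r : n → K)
    (k : n) : unitFrame φ z r *ᵥ Pi.single k 1 = φ (single k z 1) *ᵥ r := by
  ext a
  simp [unitFrame]

theorem det_unitFrame_ne_zero [IsDomain K] (φ : Matrix n n S →+* Matrix n n K) {z : n}
    {r : n → K} (hr : φ (single z z 1) *ᵥ r = r) (hr0 : r ≠ 0) :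
    (unitFrame φ z r).det ≠ 0 := by
  intro h
  obtain ⟨v, hv, hGv⟩ := exists_mulVec_eq_zero_iff.2 h
  refine hv (funext fun j => (smul_eq_zero.1 ?_).resolve_right hr0)
  calc v j • r = unitFrame φ z r *ᵥ (single z j 1 *ᵥ v) := by
        rw [single_mulVec_eq, one_mul, mulVec_smul, unitFrame_mulVec_single_one, hr]
    _ = φ (single z j 1) *ᵥ (unitFrame φ z r *ᵥ v) := by
        rw [mulVec_mulVec, mulVec_mulVec, map_single_one_mul_unitFrame]
    _ = 0 := by rw [hGv, mulVec_zero]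

theorem unitFrame_map {L : Type*} [CommRing L] (f : K →+* L) (φ : Matrix n n S →+* Matrix n n K)
    (z : n) (r : n → K) : (unitFrame φ z r).map f = unitFrame (f.mapMatrix.comp φ) z (f ∘ r) := by
  ext a k
  exact f.map_mulVec _ _ a

variable [IsDomain K] [NormalizedGCDMonoid K]

theorem exists_mulVec_eq_self_gcd_eq_one {P : Matrix n n K} (hP : IsIdempotentElem P)
    (hP0 : P ≠ 0) : ∃ r, P *ᵥ r = r ∧ Finset.univ.gcd r = 1 := by
  obtain ⟨b, hb⟩ : ∃ b, P.col b ≠ 0 := by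
    by_contra! h
    exact hP0 (ext fun a b => congrFun (h b) a)
  have hfix : P *ᵥ P.col b = P.col b := by
    rw [← mulVec_single_one, mulVec_mulVec, hP.eq]
  obtain ⟨g, hg, hg1⟩ := Finset.extract_gcd (P.col b) ⟨b, Finset.mem_univ b⟩
  have hd : Finset.univ.gcd (P.col b) ≠ 0 := fun h =>
    hb (funext fun i => Finset.gcd_eq_zero_iff.1 h i (Finset.mem_univ i))
  have hcol : P.col b = Finset.univ.gcd (P.col b) • g := funext fun i => hg i (Finset.mem_univ i)
  refine ⟨g, smul_right_injective _ hd ?_, hg1⟩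
  simp only [← mulVec_smul, ← hcol, hfix]

theorem isUnit_det_unitFrame [UniqueFactorizationMonoid K] (φ : Matrix n n S →+* Matrix n n K)
    {z : n} {r : n → K} (hr : φ (single z z 1) *ᵥ r = r) (hr1 : Finset.univ.gcd r = 1) :
    IsUnit (unitFrame φ z r).det := by
  by_contra hu
  have hr0 : r ≠ 0 := by
    rintro rfl
    exact one_ne_zero (hr1.symm.trans (Finset.gcd_eq_zero_iff.2 fun _ _ => rfl))
  obtain ⟨p, hirr, hpdet⟩ :=
    WfDvdMonoid.exists_irreducible_factor hu (det_unitFrame_ne_zero φ hr hr0)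
  have hp := hirr.prime
  have : (Ideal.span {p}).IsPrime := (Ideal.span_singleton_prime hp.ne_zero).2 hp
  let f := Ideal.Quotient.mk (Ideal.span {p})
  have hf (x : K) : f x = 0 ↔ p ∣ x := by
    rw [Ideal.Quotient.eq_zero_iff_mem, Ideal.mem_span_singleton]
  have hfr0 : f ∘ r ≠ 0 := fun h => hp.not_isUnit <| isUnit_of_dvd_one <|
    hr1 ▸ Finset.dvd_gcd fun i _ => (hf _).1 (congrFun h i)
  have hfr : (f.mapMatrix.comp φ) (single z z 1) *ᵥ (f ∘ r) = f ∘ r := by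
    ext a
    rw [RingHom.comp_apply, RingHom.mapMatrix_apply, ← f.map_mulVec, hr]
    rfl
  refine det_unitFrame_ne_zero _ hfr hfr0 ?_
  rw [← unitFrame_map, ← RingHom.mapMatrix_apply, ← RingHom.map_det, hf]
  exact hpdet

end Frame

section Conjugation

theorem exists_eq_conj_mapMatrix_of_map_single_one [Nonempty n] {S T : Type*} [Semiring S]
    [Semiring T] (φ : Matrix n n S →+* Matrix n n T) (G : (Matrix n n T)ˣ)
    (h : ∀ i j, φ (single i j 1) = (G : Matrix n n T) * single i j 1 * (↑G⁻¹ : Matrix n n T)) :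
    ∃ c : S →+* T, ∀ A, φ A = (G : Matrix n n T) * A.map c * (↑G⁻¹ : Matrix n n T) := by
  let ψ := (MulSemiringAction.toRingHom (ConjAct (Matrix n n T)ˣ) _ (ConjAct.toConjAct G⁻¹)).comp φ
  have hψ (A : Matrix n n S) : ψ A = (↑G⁻¹ : Matrix n n T) * φ A * G := by
    simp [ψ, ConjAct.units_smul_def]
  obtain ⟨c, hc⟩ := exists_eq_mapMatrix_of_map_single_one ψ fun i j => by
    simp [hψ, h, mul_assoc]
  refine ⟨c, fun A => ?_⟩
  rw [← RingHom.mapMatrix_apply, ← hc, hψ]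
  simp [mul_assoc]

theorem exists_units_smul_eq_of_conj_single_one_eq {R : Type*} [CommRing R]
    {G G' : GL n R} (h : ∀ i j, (G : Matrix n n R) * single i j 1 * (↑G⁻¹ : Matrix n n R) =
      (G' : Matrix n n R) * single i j 1 * (↑G'⁻¹ : Matrix n n R)) :
    ∃ u : Rˣ, (G' : Matrix n n R) = (u : R) • (G : Matrix n n R) := by
  have hcenter : G⁻¹ * G' ∈ Subgroup.center (GL n R) := by
    refine GeneralLinearGroup.mem_center_iff_val_mem_range_scalar.2
      (mem_range_scalar_iff_commute_single'.2 fun i j => ?_)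
    have := congrArg (fun M => (↑G⁻¹ : Matrix n n R) * M * (G' : Matrix n n R)) (h i j)
    simpa [Commute, SemiconjBy, mul_assoc] using this
  rw [GeneralLinearGroup.center_eq_range_scalar] at hcenter
  obtain ⟨u, hu⟩ := hcenter
  refine ⟨u, ?_⟩
  have hG' : (G' : Matrix n n R) = G * scalar n (u : R) := by
    rw [← GeneralLinearGroup.coe_scalar, hu, Units.val_mul, Units.mul_inv_cancel_left]
  rw [hG', ← (scalar_commute _ (Commute.all _) _).eq, scalar_apply, smul_eq_diagonal_mul]

end Conjugation

end Matrix

theorem matrix_ring_hom_conjugation {R : Type*} [CommRing R] [IsDomain R]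
    [UniqueFactorizationMonoid R] (m : ℕ)
    (φ : Matrix (Fin m) (Fin m) R →+* Matrix (Fin m) (Fin m) R) :
    ∃ G : GL (Fin m) R, ∃ φc : R →+* R,
      (∀ A : Matrix (Fin m) (Fin m) R, φ A = (G : Matrix (Fin m) (Fin m) R) * A.map φc * (↑G⁻¹ : Matrix (Fin m) (Fin m) R)) ∧
      ∀ G' : GL (Fin m) R,
        (∃ φc' : R →+* R, ∀ A : Matrix (Fin m) (Fin m) R,
          φ A = (G' : Matrix (Fin m) (Fin m) R) * A.map φc' * (↑G'⁻¹ : Matrix (Fin m) (Fin m) R)) →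
        ∃ u : Rˣ, (G' : Matrix (Fin m) (Fin m) R) = (u : R) • (G : Matrix (Fin m) (Fin m) R) := by
  cases m with
  | zero =>
    exact ⟨1, RingHom.id R, fun _ => Subsingleton.elim _ _, fun _ _ => ⟨1, Subsingleton.elim _ _⟩⟩
  | succ k => ?_
  let : NormalizationMonoid R :=
    (UniqueFactorizationMonoid.strongNormalizationMonoid (α := R)).toNormalizationMonoid
  let : NormalizedGCDMonoid R := UniqueFactorizationMonoid.toNormalizedGCDMonoid R
  have hidem : IsIdempotentElem (φ (single 0 0 1)) :=
    IsIdempotentElem.map (by simp [IsIdempotentElem]) φ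
  obtain ⟨r, hr, hr1⟩ := exists_mulVec_eq_self_gcd_eq_one hidem (map_single_one_ne_zero φ 0)
  let G := GeneralLinearGroup.mk'' (unitFrame φ 0 r) (isUnit_det_unitFrame φ hr hr1)
  have hG (i j : Fin (k + 1)) : φ (single i j 1) =
      (G : Matrix _ _ R) * single i j 1 * (↑G⁻¹ : Matrix _ _ R) :=
    (Units.eq_mul_inv_iff_mul_eq G).2 (map_single_one_mul_unitFrame φ 0 r i j)
  obtain ⟨φc, hφc⟩ := exists_eq_conj_mapMatrix_of_map_single_one φ G hG
  refine ⟨G, φc, hφc, fun G' ⟨φc', hφc'⟩ => exists_units_smul_eq_of_conj_single_one_eq ?_⟩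
  intro i j
  rw [← hG, hφc', map_single, map_one]
end

section
/- Let k be a field of characteristic p, M = k[T]/(T^p), ν multiplication by T and ∂ formal derivative. Then the trace of ν^{i}∂^{j} on M (for 0 ≤ i,j < p) is -δ_{i,p-1}·δ_{j,p-1}; i.e., the trace is -1 if i = j = p-1 and 0 otherwise. -/
/-!
In the monomial basis `ν^i ∂^j` sends `T^l` to `l(l-1)⋯(l-j+1) T^(l-j+i)`, so its trace vanishes
unless `i = j`, and then it is `∑_{l<p} l(l-1)⋯(l-i+1) = i! * (p choose (i+1))` by the hockey-stick
identity. For `i + 1 < p` the binomial coefficient is divisible by `p`; for `i = p - 1` it is `1`,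
and `(p-1)! = -1` by Wilson's theorem.
-/

/-- Multiplication by `T` on `k[T]/(T^p)`, identified with `Fin p → k` via coefficients. -/
noncomputable def nuMap (k : Type*) [Field k] (p : ℕ) : (Fin p → k) →ₗ[k] (Fin p → k) :=
  LinearMap.pi fun j : Fin p =>
    if (j : ℕ) = 0 then 0
    else LinearMap.proj ⟨(j : ℕ) - 1, Nat.lt_of_le_of_lt (Nat.sub_le _ _) j.isLt⟩

/-- The formal derivative `d/dT` on `k[T]/(T^p)`, identified with `Fin p → k`. -/
noncomputable def delMap (k : Type*) [Field k] (p : ℕ) : (Fin p → k) →ₗ[k] (Fin p → k) :=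
  LinearMap.pi fun j : Fin p =>
    if h : (j : ℕ) + 1 < p then
      (((j : ℕ) + 1 : ℕ) : k) • LinearMap.proj (⟨(j : ℕ) + 1, h⟩ : Fin p)
    else 0

open Nat

theorem Nat.sum_range_choose_eq_choose_succ (n i : ℕ) :
    ∑ l ∈ Finset.range n, l.choose i = n.choose (i + 1) := by
  induction n with
  | zero => simp
  | succ n ih => rw [Finset.sum_range_succ, ih, Nat.choose_succ_succ', add_comm]

theorem Nat.sum_range_descFactorial (n i : ℕ) :
    ∑ l ∈ Finset.range n, l.descFactorial i = i ! * n.choose (i + 1) := by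
  simp_rw [Nat.descFactorial_eq_factorial_mul_choose, ← Finset.mul_sum,
    Nat.sum_range_choose_eq_choose_succ]

theorem LinearMap.trace_pi_eq_sum {R ι : Type*} [CommRing R] [Fintype ι] [DecidableEq ι]
    (f : (ι → R) →ₗ[R] ι → R) : LinearMap.trace R (ι → R) f = ∑ l, f (Pi.single l 1) l := by
  rw [← Matrix.toLin'_toMatrix' f, Matrix.trace_toLin'_eq]
  simp [Matrix.trace, LinearMap.toMatrix'_apply]

theorem CharP.cast_factorial_pred_eq_neg_one (k : Type*) [Ring k] (p : ℕ) [Fact p.Prime]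
    [CharP k p] : ((p - 1)! : k) = -1 := by
  have h := congrArg (ZMod.castHom dvd_rfl k) (ZMod.wilsons_lemma (p := p))
  rwa [map_natCast, map_neg, map_one] at h

section

variable {k : Type*} [Field k] {p : ℕ}

theorem nuMap_apply (f : Fin p → k) (n : Fin p) :
    nuMap k p f n = if (n : ℕ) = 0 then 0 else f ⟨n - 1, by omega⟩ := by
  simp only [nuMap, LinearMap.pi_apply]
  split_ifs <;> rfl

theorem delMap_apply (f : Fin p → k) (n : Fin p) :
    delMap k p f n = if h : (n : ℕ) + 1 < p then ((n + 1 : ℕ) : k) * f ⟨n + 1, h⟩ else 0 := by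
  simp only [delMap, LinearMap.pi_apply]
  split_ifs <;> rfl

theorem nuMap_pow_apply (i : ℕ) (f : Fin p → k) (n : Fin p) :
    (nuMap k p ^ i) f n = if i ≤ (n : ℕ) then f ⟨n - i, by omega⟩ else 0 := by
  induction i generalizing f with
  | zero => simp
  | succ i ih =>
    rw [pow_succ, Module.End.mul_apply, ih]
    by_cases h : i + 1 ≤ (n : ℕ)
    · rw [if_pos h, if_pos (by omega), nuMap_apply, if_neg (show (n : ℕ) - i ≠ 0 by omega)]
      congr 2
    · rw [if_neg h]
      split_ifs
      · rw [nuMap_apply, if_pos (show (n : ℕ) - i = 0 by omega)]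
      · rfl

theorem delMap_pow_apply (j : ℕ) (f : Fin p → k) (n : Fin p) :
    (delMap k p ^ j) f n =
      if h : (n : ℕ) + j < p then (((n + j : ℕ).descFactorial j : ℕ) : k) * f ⟨n + j, h⟩
      else 0 := by
  induction j generalizing f with
  | zero => simp
  | succ j ih =>
    rw [pow_succ, Module.End.mul_apply, ih]
    split_ifs with h₁ h₂ h₂
    · rw [delMap_apply, dif_pos (show (n : ℕ) + j + 1 < p from h₂), ← mul_assoc]
      congr 1
      rw [← Nat.cast_mul, ← add_assoc, Nat.succ_descFactorial_succ, mul_comm]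
    · rw [delMap_apply, dif_neg (show ¬(n : ℕ) + j + 1 < p from h₂), mul_zero]
    · omega
    · rfl

theorem nuMap_pow_mul_delMap_pow_single_self (i j : ℕ) (l : Fin p) :
    (nuMap k p ^ i * delMap k p ^ j) (Pi.single l 1) l =
      if i = j then (((l : ℕ).descFactorial i : ℕ) : k) else 0 := by
  rw [Module.End.mul_apply, nuMap_pow_apply]
  split_ifs with hil hij hij
  · subst hij
    rw [delMap_pow_apply, dif_pos (by simp; omega)]
    simp [Nat.sub_add_cancel hil]
  · rw [delMap_pow_apply]
    split_ifs
    · rw [Pi.single_eq_of_ne (by simp [Fin.ext_iff]; omega), mul_zero]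
    · rfl
  · rw [Nat.descFactorial_eq_zero_iff_lt.2 (by omega), Nat.cast_zero]
  · rfl

theorem trace_nuMap_pow_mul_delMap_pow (i j : ℕ) :
    LinearMap.trace k (Fin p → k) (nuMap k p ^ i * delMap k p ^ j) =
      if i = j then ((i ! * p.choose (i + 1) : ℕ) : k) else 0 := by
  simp_rw [LinearMap.trace_pi_eq_sum, nuMap_pow_mul_delMap_pow_single_self]
  split_ifs
  · rw [← Nat.cast_sum, Fin.sum_univ_eq_sum_range (fun l ↦ l.descFactorial i),
      Nat.sum_range_descFactorial]
  · simp

end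

theorem trace_nu_pow_del_pow_general (k : Type*) [Field k] (p : ℕ) (hp : p.Prime) [CharP k p]
    (i j : ℕ) (hi : i < p) :
    LinearMap.trace k (Fin p → k)
        ((nuMap k p ^ i * delMap k p ^ j : Module.End k (Fin p → k)) : (Fin p → k) →ₗ[k] (Fin p → k)) =
      if i = p - 1 ∧ j = p - 1 then -1 else 0 := by
  have := Fact.mk hp
  rw [trace_nuMap_pow_mul_delMap_pow]
  by_cases hij : i = j
  · subst hij
    by_cases htop : i = p - 1
    · rw [if_pos rfl, if_pos ⟨htop, htop⟩, htop, Nat.sub_add_cancel hp.one_le, Nat.choose_self,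
        mul_one, CharP.cast_factorial_pred_eq_neg_one]
    · rw [if_pos rfl, if_neg (fun h ↦ htop h.1), Nat.cast_mul,
        (CharP.cast_eq_zero_iff k p _).2 (hp.dvd_choose_self i.succ_ne_zero (by omega)), mul_zero]
  · rw [if_neg hij, if_neg (fun h ↦ hij (h.1.trans h.2.symm))]

theorem trace_nu_pow_del_pow (k : Type*) [Field k] (p : ℕ) (hp : p.Prime) [CharP k p]
    (i j : ℕ) (hi : i < p) (hj : j < p) :
    LinearMap.trace k (Fin p → k)
        ((nuMap k p ^ i * delMap k p ^ j : Module.End k (Fin p → k)) : (Fin p → k) →ₗ[k] (Fin p → k)) =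
      if i = p - 1 ∧ j = p - 1 then -1 else 0 :=
  trace_nu_pow_del_pow_general k p hp i j hi
end

section
/- Let k be a field of characteristic p and S = k[y₁, y₂] with formal partial derivations ∂₁, ∂₂. If a closed 2-form f·dy₁∧dy₂ (f ∈ S arbitrary, every 2-form in two variables is closed) is given, then there exist h₁, h₂ ∈ S and c ∈ k[y₁^p, y₂^p] such that f = ∂₁h₂ − ∂₂h₁ + c·y₁^{p-1}y₂^{p-1}. -/
/-!
The monomial `y^u` is `∂ᵢ (y^(u + eᵢ) / (uᵢ + 1))` as soon as `uᵢ + 1` is invertible in `k`.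
The monomials for which this fails in both variables have `u₁ ≡ u₂ ≡ -1 (mod p)`, so they are
`k[y₁^p, y₂^p]`-multiples of `y₁^(p-1) y₂^(p-1)`.
-/

open MvPolynomial

theorem MvPolynomial.monomial_eq_pderiv_monomial {σ k : Type*} [Field k] (i : σ) (u : σ →₀ ℕ)
    (a : k) (hu : ((u i + 1 : ℕ) : k) ≠ 0) :
    monomial u a = pderiv i (monomial (u + Finsupp.single i 1) (a / (u i + 1 : ℕ))) := by
  rw [pderiv_monomial, add_tsub_cancel_right, Finsupp.add_apply, Finsupp.single_eq_same,
    div_mul_cancel₀ a hu]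

theorem Nat.exists_eq_mul_add_pred_of_dvd_succ {p m : ℕ} (h : p ∣ m + 1) :
    ∃ i, m = p * i + (p - 1) := by
  obtain ⟨_ | i, hi⟩ := h
  · omega
  · have hp : p ≠ 0 := by rintro rfl; simp at hi
    refine ⟨i, ?_⟩
    rw [mul_add, mul_one] at hi
    omega

namespace MvPolynomial

variable {k : Type*} [Field k]

variable (k) in
noncomputable def curl :
    (MvPolynomial (Fin 2) k × MvPolynomial (Fin 2) k) →ₗ[k] MvPolynomial (Fin 2) k :=
  (pderiv 0).toLinearMap ∘ₗ LinearMap.snd k _ _ - (pderiv 1).toLinearMap ∘ₗ LinearMap.fst k _ _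

theorem curl_apply (h₁ h₂ : MvPolynomial (Fin 2) k) :
    curl k (h₁, h₂) = pderiv 0 h₂ - pderiv 1 h₁ := rfl

variable (k) in
noncomputable abbrev adjoinXPow (p : ℕ) : Subalgebra k (MvPolynomial (Fin 2) k) :=
  Algebra.adjoin k {X 0 ^ p, X 1 ^ p}

theorem C_mul_X_pow_mul_X_pow_mem_adjoinXPow (p i j : ℕ) (a : k) :
    C a * (X 0 ^ p) ^ i * (X 1 ^ p) ^ j ∈ adjoinXPow k p := by
  have h0 : X 0 ^ p ∈ adjoinXPow k p := Algebra.subset_adjoin (Set.mem_insert _ _)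
  have h1 : X 1 ^ p ∈ adjoinXPow k p := Algebra.subset_adjoin (Set.mem_insert_of_mem _ rfl)
  exact mul_mem (mul_mem (Subalgebra.algebraMap_mem _ a) (pow_mem h0 i)) (pow_mem h1 j)

variable (k) in
noncomputable def topClassMultiples (p : ℕ) : Submodule k (MvPolynomial (Fin 2) k) :=
  (adjoinXPow k p).toSubmodule.map (LinearMap.mulRight k (X 0 ^ (p - 1) * X 1 ^ (p - 1)))

theorem monomial_mem_range_curl_sup_topClassMultiples (p : ℕ) [CharP k p] (u : Fin 2 →₀ ℕ)
    (a : k) : monomial u a ∈ LinearMap.range (curl k) ⊔ topClassMultiples k p := by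
  by_cases h0 : ((u 0 + 1 : ℕ) : k) = 0
  · by_cases h1 : ((u 1 + 1 : ℕ) : k) = 0
    · obtain ⟨i, hi⟩ :=
        Nat.exists_eq_mul_add_pred_of_dvd_succ ((CharP.cast_eq_zero_iff k p _).1 h0)
      obtain ⟨j, hj⟩ :=
        Nat.exists_eq_mul_add_pred_of_dvd_succ ((CharP.cast_eq_zero_iff k p _).1 h1)
      refine Submodule.mem_sup_right ⟨_, C_mul_X_pow_mul_X_pow_mem_adjoinXPow p i j a, ?_⟩
      rw [monomial_fin_two, hi, hj, LinearMap.mulRight_apply]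
      ring
    · refine Submodule.mem_sup_left
        ⟨(-monomial (u + Finsupp.single 1 1) (a / (u 1 + 1 : ℕ)), 0), ?_⟩
      rw [curl_apply, (pderiv 0).map_zero, map_neg, zero_sub, neg_neg,
        ← monomial_eq_pderiv_monomial 1 u a h1]
  · refine Submodule.mem_sup_left
      ⟨(0, monomial (u + Finsupp.single 0 1) (a / (u 0 + 1 : ℕ))), ?_⟩
    rw [curl_apply, (pderiv 1).map_zero, sub_zero, ← monomial_eq_pderiv_monomial 0 u a h0]

theorem range_curl_sup_topClassMultiples_eq_top (p : ℕ) [CharP k p] :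
    LinearMap.range (curl k) ⊔ topClassMultiples k p = ⊤ :=
  Submodule.eq_top_iff'.2 fun f =>
    f.induction_on' (monomial_mem_range_curl_sup_topClassMultiples p) fun _ _ => add_mem

end MvPolynomial

theorem deRham_H2_two_variables_general {k : Type*} [Field k] (p : ℕ) [CharP k p]
    (f : MvPolynomial (Fin 2) k) :
    ∃ h₁ h₂ c : MvPolynomial (Fin 2) k,
      c ∈ Algebra.adjoin k
          ({(X 0 : MvPolynomial (Fin 2) k) ^ p, (X 1 : MvPolynomial (Fin 2) k) ^ p} :
            Set (MvPolynomial (Fin 2) k)) ∧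
      f = pderiv 0 h₂ - pderiv 1 h₁ + c * X 0 ^ (p - 1) * X 1 ^ (p - 1) := by
  have hf : f ∈ LinearMap.range (curl k) ⊔ topClassMultiples k p :=
    range_curl_sup_topClassMultiples_eq_top (k := k) p ▸ Submodule.mem_top
  obtain ⟨_, ⟨⟨h₁, h₂⟩, rfl⟩, _, ⟨c, hc, rfl⟩, hf⟩ := Submodule.mem_sup.1 hf
  exact ⟨h₁, h₂, c, hc, by rw [← hf, curl_apply, LinearMap.mulRight_apply, mul_assoc]⟩

theorem deRham_H2_two_variables {k : Type*} [Field k] (p : ℕ) (hp : p.Prime) [CharP k p]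
    (f : MvPolynomial (Fin 2) k) :
    ∃ h₁ h₂ c : MvPolynomial (Fin 2) k,
      c ∈ Algebra.adjoin k
          ({(X 0 : MvPolynomial (Fin 2) k) ^ p, (X 1 : MvPolynomial (Fin 2) k) ^ p} :
            Set (MvPolynomial (Fin 2) k)) ∧
      f = pderiv 0 h₂ - pderiv 1 h₁ + c * X 0 ^ (p - 1) * X 1 ^ (p - 1) :=
  deRham_H2_two_variables_general p f
end
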